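/- Let ρ > 0, σ = ±1, s₁ ∈ ℂ, s₂ ∈ ℂ. Define ξ' = x + 2σρt + s₁, η' = x − 2σρt − s₁*, S = (2/3)ρ²ξ'³ + 2σρt + ξ' + s₂, R = −(2/3)ρ²η'³ + 2σρt − 2iσρη'² + η' + s₂*. If along a path (x(t), t) both |ξ(t)| → ∞ and |η(t)| → ∞ with ξ = x + 2σρt, η = x − 2σρt and |ξ| = O(|η|) = O(|t|) or larger, then the second-order rational solution u₂(x,t) = ρe^{2iρ²t+iφ} + 8iσρ²e^{2iρ²t+iφ}(ρ²ξ'²R + ρ²η'²S + 2iσρη'S − S)/(ρ²(ξ'²P + η'²Q + 2ξ'η') + 2ρξ'(2ρR + iσ) + 2ρη'(2ρS + iσ) − 4ρ²RS − 1), with P = 1 − 4iσρR and Q = 1 − 4iσρS, satisfies u₂(x(t),t) e^{−2iρ²t−iφ} → ρ as |t| → ∞. -/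

import Mathlib

open Complex Filter Asymptotics

/-- The second-order rational solution of the defocusing nonlocal NLS equation. -/
noncomputable def u2sol (ρ σ φ : ℝ) (s1 s2 : ℂ) (x t : ℝ) : ℂ :=
  let ξ' : ℂ := (x : ℂ) + 2 * σ * ρ * t + s1
  let η' : ℂ := (x : ℂ) - 2 * σ * ρ * t - (starRingEnd ℂ) s1
  let S : ℂ := (2 / 3) * ρ ^ 2 * ξ' ^ 3 + 2 * σ * ρ * t + ξ' + s2
  let R : ℂ := -((2 / 3) * ρ ^ 2 * η' ^ 3) + 2 * σ * ρ * t
      - 2 * Complex.I * σ * ρ * η' ^ 2 + η' + (starRingEnd ℂ) s2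
  let P : ℂ := 1 - 4 * Complex.I * σ * ρ * R
  let Q : ℂ := 1 - 4 * Complex.I * σ * ρ * S
  (ρ : ℂ) * Complex.exp (2 * Complex.I * ρ ^ 2 * t + Complex.I * φ) +
    8 * Complex.I * σ * ρ ^ 2 * Complex.exp (2 * Complex.I * ρ ^ 2 * t + Complex.I * φ) *
      (ρ ^ 2 * ξ' ^ 2 * R + ρ ^ 2 * η' ^ 2 * S + 2 * Complex.I * σ * ρ * η' * S - S) /
      (ρ ^ 2 * (ξ' ^ 2 * P + η' ^ 2 * Q + 2 * ξ' * η') +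
        2 * ρ * ξ' * (2 * ρ * R + Complex.I * σ) +
        2 * ρ * η' * (2 * ρ * S + Complex.I * σ) - 4 * ρ ^ 2 * R * S - 1)

/-!
Write `A = ξ'`, `B = η'`. Since `S = (2/3)ρ²A³ + O(|ξ|)` and `R = -(2/3)ρ²B³ + O(|ξ|²)`, the
numerator of the correction term is `O(|ξ|⁵)`, while its denominator is
`A²B²((16/9)ρ⁶AB - (8/3)iσρ⁵(A - B)) + O(|ξ|⁵)`. When `ξ`, `η` and `t` grow at comparable rates,
`|AB| ≍ |ξ|²`, so this leading term has size `≍ |ξ|⁶` and the correction decays like `1/|ξ|`.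
-/

open Topology

noncomputable def u2Num (ρ σ : ℝ) (A B S R : ℂ) : ℂ :=
  ρ ^ 2 * A ^ 2 * R + ρ ^ 2 * B ^ 2 * S + 2 * I * σ * ρ * B * S - S

noncomputable def u2Den (ρ σ : ℝ) (A B S R : ℂ) : ℂ :=
  ρ ^ 2 * (A ^ 2 * (1 - 4 * I * σ * ρ * R) + B ^ 2 * (1 - 4 * I * σ * ρ * S) + 2 * A * B) +
    2 * ρ * A * (2 * ρ * R + I * σ) + 2 * ρ * B * (2 * ρ * S + I * σ) - 4 * ρ ^ 2 * R * S - 1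

noncomputable def u2DenLeading (ρ σ : ℝ) (A B : ℂ) : ℂ :=
  A ^ 2 * B ^ 2 * (16 / 9 * ρ ^ 6 * (A * B) - 8 / 3 * I * σ * ρ ^ 5 * (A - B))

noncomputable def u2DenLower (ρ σ : ℝ) (A B S₁ R₁ : ℂ) : ℂ :=
  ρ ^ 2 * (A + B) ^ 2 - 4 * I * σ * ρ ^ 3 * (A ^ 2 * R₁ + B ^ 2 * S₁)
    + 8 / 3 * ρ ^ 4 * (A * B * (A ^ 2 - B ^ 2) + B ^ 3 * S₁ - A ^ 3 * R₁)
    + 4 * ρ ^ 2 * (A * R₁ + B * S₁) + 2 * I * σ * ρ * (A + B) - 4 * ρ ^ 2 * R₁ * S₁ - 1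

lemma u2Den_eq_leading_add_lower (ρ σ : ℝ) (A B S R : ℂ) :
    u2Den ρ σ A B S R = u2DenLeading ρ σ A B +
      u2DenLower ρ σ A B (S - 2 / 3 * ρ ^ 2 * A ^ 3) (R + 2 / 3 * ρ ^ 2 * B ^ 3) := by
  unfold u2Den u2DenLeading u2DenLower
  ring

section Gauge

variable {α E : Type*} [NormedAddCommGroup E] {l : Filter α} {w : α → ℝ} {m n : ℕ}

lemma Filter.Tendsto.isBigO_pow_pow (hw : Tendsto w l atTop) (h : m ≤ n) :
    (fun a => w a ^ m) =O[l] fun a => w a ^ n :=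
  IsBigO.of_bound 1 <| (hw.eventually_ge_atTop 1).mono fun a ha => by
    simpa [abs_of_nonneg (zero_le_one.trans ha)] using pow_le_pow_right₀ ha h

lemma Filter.Tendsto.isLittleO_pow_pow (hw : Tendsto w l atTop) (h : m < n) :
    (fun a => w a ^ m) =o[l] fun a => w a ^ n :=
  (isLittleO_pow_pow_atTop_of_lt h).comp_tendsto hw

lemma Filter.Tendsto.isBigO_const (hw : Tendsto w l atTop) (c : E) : (fun _ => c) =O[l] w :=
  (isLittleO_const_left.2 <| .inr <| tendsto_norm_atTop_atTop.comp hw).isBigO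

lemma Asymptotics.IsBigO.trans_pow_of_le {f : α → E} (hw : Tendsto w l atTop)
    (hf : f =O[l] fun a => w a ^ m) (h : m ≤ n) : f =O[l] fun a => w a ^ n :=
  hf.trans (hw.isBigO_pow_pow h)

lemma Asymptotics.IsBigO.mul_pow_add {f g : α → ℂ} (hf : f =O[l] fun a => w a ^ m)
    (hg : g =O[l] fun a => w a ^ n) : (fun a => f a * g a) =O[l] fun a => w a ^ (m + n) := by
  simpa only [pow_add] using hf.mul hg

lemma Asymptotics.IsBigO.pow_pow_mul {f : α → ℂ} (hf : f =O[l] fun a => w a ^ m) (k : ℕ) :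
    (fun a => f a ^ k) =O[l] fun a => w a ^ (m * k) := by
  simpa only [pow_mul] using hf.pow k

lemma Asymptotics.IsBigO.of_sub_isLittleO {F : Type*} [Norm F] {f f' : α → E} {g : α → F}
    (h : g =O[l] f) (h' : (fun a => f' a - f a) =o[l] g) : g =O[l] f' :=
  h.trans (IsEquivalent.isBigO_symm (u := f') (h'.trans_isBigO h))

end Gauge

section Asymptotics

variable {α : Type*} {l : Filter α} {w : α → ℝ} {ρ σ : ℝ} {A B S R : α → ℂ}

lemma isBigO_u2Num (hw : Tendsto w l atTop) (hA : A =O[l] w) (hB : B =O[l] w)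
    (hS : S =O[l] fun a => w a ^ 3) (hR : R =O[l] fun a => w a ^ 3) :
    (fun a => u2Num ρ σ (A a) (B a) (S a) (R a)) =O[l] fun a => w a ^ 5 := by
  replace hA : A =O[l] fun a => w a ^ 1 := by simpa using hA
  replace hB : B =O[l] fun a => w a ^ 1 := by simpa using hB
  have lift {f : α → ℂ} {m : ℕ} (hf : f =O[l] fun a => w a ^ m) (hm : m ≤ 5) :
      f =O[l] fun a => w a ^ 5 := hf.trans_pow_of_le hw hm
  have t1 := lift (((hA.pow_pow_mul 2).mul_pow_add hR).const_mul_left ((ρ : ℂ) ^ 2)) le_rfl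
  have t2 := lift (((hB.pow_pow_mul 2).mul_pow_add hS).const_mul_left ((ρ : ℂ) ^ 2)) le_rfl
  have t3 := lift ((hB.mul_pow_add hS).const_mul_left (2 * I * σ * ρ)) (by norm_num)
  have t4 := lift hS (by norm_num)
  exact (((t1.add t2).add t3).sub t4).congr_left fun a => by unfold u2Num; ring

lemma isBigO_u2DenLower (hw : Tendsto w l atTop) (hA : A =O[l] w) (hB : B =O[l] w)
    (hS : S =O[l] w) (hR : R =O[l] fun a => w a ^ 2) :
    (fun a => u2DenLower ρ σ (A a) (B a) (S a) (R a)) =O[l] fun a => w a ^ 5 := by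
  replace hA : A =O[l] fun a => w a ^ 1 := by simpa using hA
  replace hB : B =O[l] fun a => w a ^ 1 := by simpa using hB
  replace hS : S =O[l] fun a => w a ^ 1 := by simpa using hS
  have lift {f : α → ℂ} {m : ℕ} (hf : f =O[l] fun a => w a ^ m) (hm : m ≤ 5) :
      f =O[l] fun a => w a ^ 5 := hf.trans_pow_of_le hw hm
  have hA2 := hA.pow_pow_mul 2
  have hB2 := hB.pow_pow_mul 2
  have t1 := lift (((hA.add hB).pow_pow_mul 2).const_mul_left ((ρ : ℂ) ^ 2)) (by norm_num)
  have t2 := lift ((hA2.mul_pow_add hR).const_mul_left (4 * I * σ * ρ ^ 3)) (by norm_num)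
  have t3 := lift ((hB2.mul_pow_add hS).const_mul_left (4 * I * σ * ρ ^ 3)) (by norm_num)
  have t4 := lift (((hA.mul_pow_add hB).mul_pow_add (hA2.sub hB2)).const_mul_left
    (8 / 3 * (ρ : ℂ) ^ 4)) (by norm_num)
  have t5 := lift (((hB.pow_pow_mul 3).mul_pow_add hS).const_mul_left (8 / 3 * (ρ : ℂ) ^ 4))
    (by norm_num)
  have t6 := lift (((hA.pow_pow_mul 3).mul_pow_add hR).const_mul_left (8 / 3 * (ρ : ℂ) ^ 4))
    (by norm_num)
  have t7 := lift ((hA.mul_pow_add hR).const_mul_left (4 * (ρ : ℂ) ^ 2)) (by norm_num)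
  have t8 := lift ((hB.mul_pow_add hS).const_mul_left (4 * (ρ : ℂ) ^ 2)) (by norm_num)
  have t9 := lift ((hA.add hB).const_mul_left (2 * I * σ * ρ)) (by norm_num)
  have t10 := lift ((hR.mul_pow_add hS).const_mul_left (4 * (ρ : ℂ) ^ 2)) (by norm_num)
  have t11 := lift ((isBigO_const_one ℝ (1 : ℂ) l).congr_right
    fun a => (pow_zero (w a)).symm) (Nat.zero_le 5)
  exact ((((((((((t1.sub t2).sub t3).add t4).add t5).sub t6).add t7).add t8).add t9).sub
    t10).sub t11).congr_left fun a => by unfold u2DenLower; ring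

lemma pow_six_isBigO_u2DenLeading (hρ : ρ ≠ 0) (hw : Tendsto w l atTop) (hA : A =O[l] w)
    (hB : B =O[l] w) (hAB : (fun a => w a ^ 2) =O[l] fun a => A a * B a) :
    (fun a => w a ^ 6) =O[l] fun a => u2DenLeading ρ σ (A a) (B a) := by
  have hc : IsUnit (16 / 9 * (ρ : ℂ) ^ 6) := Ne.isUnit (by simp [hρ])
  have hlin : (fun a => -(8 / 3 * I * σ * ρ ^ 5) * (A a - B a)) =o[l] fun a => w a ^ 2 :=
    ((hA.sub hB).const_mul_left _).trans_isLittleO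
      (by simpa using hw.isLittleO_pow_pow one_lt_two)
  have hM := (hAB.const_mul_right' hc).of_sub_isLittleO (f' := fun a =>
      16 / 9 * ρ ^ 6 * (A a * B a) - 8 / 3 * I * σ * ρ ^ 5 * (A a - B a))
    (hlin.congr_left fun a => by ring)
  exact ((hAB.mul hAB).mul hM).congr' (.of_forall fun a => by ring)
    (.of_forall fun a => by unfold u2DenLeading; ring)

theorem tendsto_u2Num_div_u2Den (hρ : ρ ≠ 0) (hw : Tendsto w l atTop) (hA : A =O[l] w)
    (hB : B =O[l] w) (hS : (fun a => S a - 2 / 3 * ρ ^ 2 * A a ^ 3) =O[l] w)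
    (hR : (fun a => R a + 2 / 3 * ρ ^ 2 * B a ^ 3) =O[l] fun a => w a ^ 2)
    (hAB : (fun a => w a ^ 2) =O[l] fun a => A a * B a) :
    Tendsto (fun a => u2Num ρ σ (A a) (B a) (S a) (R a) / u2Den ρ σ (A a) (B a) (S a) (R a))
      l (𝓝 0) := by
  have hw56 : (fun a => w a ^ 5) =o[l] fun a => w a ^ 6 := hw.isLittleO_pow_pow (by norm_num)
  have hmain := pow_six_isBigO_u2DenLeading (σ := σ) hρ hw hA hB hAB
  have hden := (isBigO_refl _ l).of_sub_isLittleO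
    (f' := fun a => u2Den ρ σ (A a) (B a) (S a) (R a))
    (((isBigO_u2DenLower hw hA hB hS hR).trans_isLittleO (hw56.trans_isBigO hmain)).congr_left
      fun a => by rw [u2Den_eq_leading_add_lower]; ring)
  have hA1 : A =O[l] fun a => w a ^ 1 := by simpa using hA
  have hB1 : B =O[l] fun a => w a ^ 1 := by simpa using hB
  have hS3 : S =O[l] fun a => w a ^ 3 :=
    (((hA1.pow_pow_mul 3).const_mul_left (2 / 3 * (ρ : ℂ) ^ 2)).add
      (hS.trans (by simpa using hw.isBigO_pow_pow (by norm_num : 1 ≤ 3)))).congr_left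
      fun a => by ring
  have hR3 : R =O[l] fun a => w a ^ 3 :=
    (((hB1.pow_pow_mul 3).const_mul_left (2 / 3 * (ρ : ℂ) ^ 2)).neg_left.add
      (hR.trans_pow_of_le hw (by norm_num : 2 ≤ 3))).congr_left fun a => by ring
  exact ((isBigO_u2Num hw hA hB hS3 hR3).trans_isLittleO
    ((hw56.trans_isBigO hmain).trans_isBigO hden)).tendsto_div_nhds_zero

end Asymptotics

noncomputable def u2Xi (ρ σ : ℝ) (s1 : ℂ) (x t : ℝ) : ℂ :=
  (x : ℂ) + 2 * σ * ρ * t + s1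

noncomputable def u2Eta (ρ σ : ℝ) (s1 : ℂ) (x t : ℝ) : ℂ :=
  (x : ℂ) - 2 * σ * ρ * t - (starRingEnd ℂ) s1

noncomputable def u2S (ρ σ : ℝ) (s1 s2 : ℂ) (x t : ℝ) : ℂ :=
  (2 / 3) * ρ ^ 2 * u2Xi ρ σ s1 x t ^ 3 + 2 * σ * ρ * t + u2Xi ρ σ s1 x t + s2

noncomputable def u2R (ρ σ : ℝ) (s1 s2 : ℂ) (x t : ℝ) : ℂ :=
  -((2 / 3) * ρ ^ 2 * u2Eta ρ σ s1 x t ^ 3) + 2 * σ * ρ * t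
    - 2 * I * σ * ρ * u2Eta ρ σ s1 x t ^ 2 + u2Eta ρ σ s1 x t + (starRingEnd ℂ) s2

lemma u2sol_mul_exp (ρ σ φ : ℝ) (s1 s2 : ℂ) (x t : ℝ) :
    u2sol ρ σ φ s1 s2 x t * exp (-(2 * I * ρ ^ 2 * t) - I * φ) = ρ + 8 * I * σ * ρ ^ 2 *
      (u2Num ρ σ (u2Xi ρ σ s1 x t) (u2Eta ρ σ s1 x t) (u2S ρ σ s1 s2 x t)
          (u2R ρ σ s1 s2 x t) /
        u2Den ρ σ (u2Xi ρ σ s1 x t) (u2Eta ρ σ s1 x t) (u2S ρ σ s1 s2 x t)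
          (u2R ρ σ s1 s2 x t)) := by
  have he : exp (2 * I * ρ ^ 2 * t + I * φ) * exp (-(2 * I * ρ ^ 2 * t) - I * φ) = 1 := by
    rw [← exp_add, ← exp_zero]; ring_nf
  set N := u2Num ρ σ (u2Xi ρ σ s1 x t) (u2Eta ρ σ s1 x t) (u2S ρ σ s1 s2 x t)
    (u2R ρ σ s1 s2 x t)
  set D := u2Den ρ σ (u2Xi ρ σ s1 x t) (u2Eta ρ σ s1 x t) (u2S ρ σ s1 s2 x t)
    (u2R ρ σ s1 s2 x t)
  have hu : u2sol ρ σ φ s1 s2 x t = ρ * exp (2 * I * ρ ^ 2 * t + I * φ) +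
      8 * I * σ * ρ ^ 2 * exp (2 * I * ρ ^ 2 * t + I * φ) * N / D := rfl
  rw [hu]
  linear_combination (ρ + 8 * I * σ * ρ ^ 2 * N / D) * he

section Path

variable {l : Filter ℝ} {w x : ℝ → ℝ} {ρ σ : ℝ} {s1 s2 : ℂ}

lemma isBigO_u2Xi (hw : Tendsto w l atTop) (hξ : (fun t => x t + 2 * σ * ρ * t) =O[l] w) :
    (fun t => u2Xi ρ σ s1 (x t) t) =O[l] w :=
  ((isBigO_ofReal_left.2 hξ).add (hw.isBigO_const s1)).congr_left fun t => by
    unfold u2Xi; push_cast; ring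

lemma isBigO_u2Eta (hw : Tendsto w l atTop) (hη : (fun t => x t - 2 * σ * ρ * t) =O[l] w) :
    (fun t => u2Eta ρ σ s1 (x t) t) =O[l] w :=
  ((isBigO_ofReal_left.2 hη).sub (hw.isBigO_const ((starRingEnd ℂ) s1))).congr_left
    fun t => by unfold u2Eta; push_cast; ring

lemma isBigO_u2S_sub (hw : Tendsto w l atTop) (hξ : (fun t => x t + 2 * σ * ρ * t) =O[l] w)
    (ht : (fun t => t) =O[l] w) :
    (fun t => u2S ρ σ s1 s2 (x t) t - 2 / 3 * ρ ^ 2 * u2Xi ρ σ s1 (x t) t ^ 3) =O[l] w :=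
  ((((isBigO_ofReal_left.2 ht).const_mul_left (2 * σ * ρ)).add (isBigO_u2Xi hw hξ)).add
    (hw.isBigO_const s2)).congr_left fun t => by unfold u2S; ring

lemma isBigO_u2R_add (hw : Tendsto w l atTop) (hη : (fun t => x t - 2 * σ * ρ * t) =O[l] w)
    (ht : (fun t => t) =O[l] w) :
    (fun t => u2R ρ σ s1 s2 (x t) t + 2 / 3 * ρ ^ 2 * u2Eta ρ σ s1 (x t) t ^ 3) =O[l]
      fun t => w t ^ 2 := by
  have hw12 : w =O[l] fun t => w t ^ 2 := by simpa using hw.isBigO_pow_pow one_le_two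
  have hB : (fun t => u2Eta ρ σ s1 (x t) t) =O[l] fun t => w t ^ 1 := by
    simpa using isBigO_u2Eta hw hη
  exact (((((isBigO_ofReal_left.2 ht).const_mul_left (2 * σ * ρ)).trans hw12).sub
    ((hB.pow_pow_mul 2).const_mul_left (2 * I * σ * ρ))).add
    (((isBigO_u2Eta hw hη).add (hw.isBigO_const ((starRingEnd ℂ) s2))).trans hw12)).congr_left
    fun t => by unfold u2R; ring

lemma isBigO_u2Xi_mul_u2Eta (hw : Tendsto w l atTop)
    (hξ : (fun t => x t + 2 * σ * ρ * t) =O[l] w)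
    (hη : (fun t => x t - 2 * σ * ρ * t) =O[l] w)
    (hwξ : w =O[l] fun t => x t + 2 * σ * ρ * t)
    (hwη : w =O[l] fun t => x t - 2 * σ * ρ * t) :
    (fun t => w t ^ 2) =O[l] fun t => u2Xi ρ σ s1 (x t) t * u2Eta ρ σ s1 (x t) t := by
  have hmain : (fun t => w t ^ 2) =O[l]
      fun t => (((x t + 2 * σ * ρ * t) * (x t - 2 * σ * ρ * t) : ℝ) : ℂ) :=
    isBigO_ofReal_right.2 ((hwξ.mul hwη).congr_left fun t => (sq (w t)).symm)
  refine hmain.of_sub_isLittleO ?_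
  have hlin := ((isBigO_ofReal_left.2 hξ).const_mul_left (-(starRingEnd ℂ) s1)).add
    ((isBigO_u2Eta (s1 := s1) hw hη).const_mul_left s1)
  refine (hlin.trans_isLittleO (by simpa using hw.isLittleO_pow_pow one_lt_two)).congr_left
    fun t => ?_
  unfold u2Xi u2Eta; push_cast; ring

end Path

theorem second_order_no_soliton_comparable_rates_general (ρ σ φ : ℝ) (hρ : 0 < ρ)
    (s1 s2 : ℂ) (x : ℝ → ℝ)
    (hξ : Filter.Tendsto (fun t : ℝ => |x t + 2 * σ * ρ * t|) (Filter.cocompact ℝ)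
      Filter.atTop)
    (hξη : (fun t : ℝ => x t + 2 * σ * ρ * t) =O[Filter.cocompact ℝ]
      (fun t : ℝ => x t - 2 * σ * ρ * t))
    (hηξ : (fun t : ℝ => x t - 2 * σ * ρ * t) =O[Filter.cocompact ℝ]
      (fun t : ℝ => x t + 2 * σ * ρ * t))
    (htξ : (fun t : ℝ => t) =O[Filter.cocompact ℝ]
      (fun t : ℝ => x t + 2 * σ * ρ * t)) :
    Filter.Tendsto
      (fun t : ℝ => u2sol ρ σ φ s1 s2 (x t) t *
        Complex.exp (-(2 * Complex.I * ρ ^ 2 * t) - Complex.I * φ))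
      (Filter.cocompact ℝ) (nhds (ρ : ℂ)) := by
  have hξw := isBigO_abs_right.2 (isBigO_refl (fun t => x t + 2 * σ * ρ * t) (cocompact ℝ))
  have hηw := isBigO_abs_right.2 hηξ
  have hwξ := isBigO_abs_left.2 (isBigO_refl (fun t => x t + 2 * σ * ρ * t) (cocompact ℝ))
  have hlim := tendsto_u2Num_div_u2Den (σ := σ) hρ.ne' hξ (isBigO_u2Xi (s1 := s1) hξ hξw)
    (isBigO_u2Eta hξ hηw) (isBigO_u2S_sub (s2 := s2) hξ hξw (isBigO_abs_right.2 htξ))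
    (isBigO_u2R_add (s2 := s2) hξ hηw (isBigO_abs_right.2 htξ))
    (isBigO_u2Xi_mul_u2Eta hξ hξw hηw hwξ (isBigO_abs_left.2 hξη))
  simpa only [u2sol_mul_exp, mul_zero, add_zero] using
    (hlim.const_mul (8 * I * σ * ρ ^ 2)).const_add (ρ : ℂ)

/-- Along any path on which `ξ = x + 2σρt` and `η = x − 2σρt` both blow up at
comparable rates (no smaller than `O(|t|)`), the second-order rational solution tends
to the plane-wave background `ρ` (after removing the phase) as `|t| → ∞`; i.e. no
asymptotic soliton arises in this regime. -/
theorem second_order_no_soliton_comparable_rates (ρ σ φ : ℝ) (hρ : 0 < ρ)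
    (hσ : σ = 1 ∨ σ = -1) (s1 s2 : ℂ) (x : ℝ → ℝ)
    (hξ : Filter.Tendsto (fun t : ℝ => |x t + 2 * σ * ρ * t|) (Filter.cocompact ℝ)
      Filter.atTop)
    (hη : Filter.Tendsto (fun t : ℝ => |x t - 2 * σ * ρ * t|) (Filter.cocompact ℝ)
      Filter.atTop)
    (hξη : (fun t : ℝ => x t + 2 * σ * ρ * t) =O[Filter.cocompact ℝ]
      (fun t : ℝ => x t - 2 * σ * ρ * t))
    (hηξ : (fun t : ℝ => x t - 2 * σ * ρ * t) =O[Filter.cocompact ℝ]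
      (fun t : ℝ => x t + 2 * σ * ρ * t))
    (htξ : (fun t : ℝ => t) =O[Filter.cocompact ℝ]
      (fun t : ℝ => x t + 2 * σ * ρ * t)) :
    Filter.Tendsto
      (fun t : ℝ => u2sol ρ σ φ s1 s2 (x t) t *
        Complex.exp (-(2 * Complex.I * ρ ^ 2 * t) - Complex.I * φ))
      (Filter.cocompact ℝ) (nhds (ρ : ℂ)) :=
  second_order_no_soliton_comparable_rates_general ρ σ φ hρ s1 s2 x hξ hξη hηξ htξ
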